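/- arXiv:2506.00851 — 2 statements merged into one kernel-verified Lean document; each statement's English description precedes it below -/
import Mathlib

section
/- For every natural number ℓ, ∑_{k=0}^{ℓ} C(ℓ,k)² · k! · ((ℓ−k−1)!!)² · 𝕀(ℓ−k even) = (2ℓ−1)!!, where C(ℓ,k) is the binomial coefficient, (−1)!! = 1, and 𝕀 is the indicator function. -/
open Finset Nat

/-- `auxB m = (m-1)!!` if `m` is even, else `0`. -/
def auxB (m : ℕ) : ℕ := if Even m then Nat.doubleFactorial (m - 1) else 0

/-- Matchings of `a` unprimed and `b` primed points with `k` mixed pairs. -/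
def auxT (a b k : ℕ) : ℕ :=
  a.choose k * b.choose k * k.factorial * auxB (a - k) * auxB (b - k)

def auxS (a b : ℕ) : ℕ := ∑ k ∈ Finset.range (a + 1), auxT a b k

lemma auxB_step (m : ℕ) : auxB (m + 2) = (m + 1) * auxB m := by
  unfold auxB
  by_cases h : Even m
  · have h2 : Even (m + 2) := by rcases h with ⟨t, ht⟩; exact ⟨t + 1, by omega⟩
    rw [if_pos h2, if_pos h]
    rcases m with _ | m
    · rfl
    · have e1 : m + 1 + 2 - 1 = m + 2 := by omega
      have e2 : m + 1 - 1 = m := by omega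
      rw [e1, e2, Nat.doubleFactorial]
  · have h2 : ¬ Even (m + 2) := fun ⟨t, ht⟩ => h ⟨t - 1, by omega⟩
    rw [if_neg h2, if_neg h, Nat.mul_zero]

lemma dfact_step (n : ℕ) (hn : 1 ≤ n) :
    n * Nat.doubleFactorial (n - 2) = Nat.doubleFactorial n := by
  rcases n with _ | n
  · omega
  rcases n with _ | n
  · rfl
  · have : n + 1 + 1 - 2 = n := by omega
    rw [this, Nat.doubleFactorial]

lemma auxT_zero_of_lt {a k : ℕ} (b : ℕ) (h : a < k) : auxT a b k = 0 := by
  unfold auxT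
  rw [Nat.choose_eq_zero_of_lt h]
  ring

lemma auxT_zero (a b : ℕ) : auxT (a + 1) b 0 = a * auxT (a - 1) b 0 := by
  unfold auxT
  simp only [Nat.choose_zero_right, Nat.factorial_zero, Nat.sub_zero, one_mul, mul_one]
  have h : auxB (a + 1) = a * auxB (a - 1) := by
    rcases a with _ | a
    · simp [auxB]
    · have e : a + 1 - 1 = a := by omega
      rw [e, auxB_step]
  rw [h]; ring

lemma key_sub (a k : ℕ) :
    a * Nat.choose (a - 1) (k + 1) * auxB (a - 1 - (k + 1)) =
      Nat.choose a (k + 1) * auxB (a - k) := by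
  rcases Nat.lt_or_ge a (k + 2) with h | h
  · rcases Nat.lt_or_ge a (k + 1) with h1 | h1
    · rw [Nat.choose_eq_zero_of_lt h1, Nat.zero_mul]
      rcases a with _ | a
      · simp
      · rw [Nat.choose_eq_zero_of_lt (by omega : a + 1 - 1 < k + 1), Nat.mul_zero,
          Nat.zero_mul]
    · -- a = k + 1
      have ha : a = k + 1 := by omega
      subst ha
      have e : k + 1 - k = 1 := by omega
      rw [e]
      have hB : auxB 1 = 0 := by simp [auxB]
      rw [hB, Nat.mul_zero,
        Nat.choose_eq_zero_of_lt (by omega : k + 1 - 1 < k + 1), Nat.mul_zero, Nat.zero_mul]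
  · -- a ≥ k + 2
    obtain ⟨m, rfl⟩ : ∃ m, a = k + 2 + m := ⟨a - k - 2, by omega⟩
    have e1 : k + 2 + m - 1 - (k + 1) = m := by omega
    have e2 : k + 2 + m - k = m + 2 := by omega
    rw [e1, e2, auxB_step]
    have h1 : (k + 2 + m) * Nat.choose (k + 2 + m - 1) (k + 1) =
        Nat.choose (k + 2 + m) (k + 1) * (m + 1) := by
      have hc := Nat.choose_mul_succ_eq (k + 1 + m) (k + 1)
      have e3 : k + 1 + m + 1 = k + 2 + m := by omega
      rw [e3] at hc
      have e4 : k + 2 + m - (k + 1) = m + 1 := by omega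
      rw [e4] at hc
      have e5 : k + 2 + m - 1 = k + 1 + m := by omega
      rw [e5]
      linarith [hc]
    rw [h1]
    ring

lemma auxT_rec (a b k : ℕ) :
    auxT (a + 1) b (k + 1) = b * auxT a (b - 1) k + a * auxT (a - 1) b (k + 1) := by
  rcases b with _ | b
  · simp [auxT, Nat.choose_eq_zero_of_lt (Nat.succ_pos k)]
  · unfold auxT
    have e1 : b + 1 - 1 = b := by omega
    have e2 : a + 1 - (k + 1) = a - k := by omega
    have e3 : b + 1 - (k + 1) = b - k := by omega
    rw [e1, e2, e3]
    have hb : (b + 1) * Nat.choose b k = Nat.choose (b + 1) (k + 1) * (k + 1) :=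
      Nat.add_one_mul_choose_eq b k
    have hpascal : Nat.choose (a + 1) (k + 1) = Nat.choose a k + Nat.choose a (k + 1) :=
      Nat.choose_succ_succ a k
    have hfac : (k + 1).factorial = (k + 1) * k.factorial := rfl
    have r1 : (b + 1) * (Nat.choose a k * Nat.choose b k * k.factorial *
          auxB (a - k) * auxB (b - k)) =
        Nat.choose a k * (Nat.choose (b + 1) (k + 1) * (k + 1)) * k.factorial *
          auxB (a - k) * auxB (b - k) := by
      rw [← hb]; ring
    have r2 : a * (Nat.choose (a - 1) (k + 1) * Nat.choose (b + 1) (k + 1) *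
          (k + 1).factorial * auxB (a - 1 - (k + 1)) * auxB (b - k)) =
        Nat.choose a (k + 1) * auxB (a - k) *
          (Nat.choose (b + 1) (k + 1) * (k + 1).factorial * auxB (b - k)) := by
      rw [← key_sub a k]; ring
    rw [r1, r2, hpascal, hfac]
    ring

lemma auxS_main : ∀ a b : ℕ, Even (a + b) → auxS a b = Nat.doubleFactorial (a + b - 1) := by
  intro a
  induction a using Nat.strong_induction_on with
  | _ a ih =>
    intro b heven
    rcases a with _ | a
    · -- a = 0
      simp only [auxS, Finset.sum_range_one, auxT]
      have hb : Even b := by simpa using heven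
      simp [auxB, hb]
    · -- a = a' + 1
      have hsum : auxS (a + 1) b =
          b * auxS a (b - 1) + a * ∑ k ∈ Finset.range (a + 2), auxT (a - 1) b k := by
        unfold auxS
        rw [Finset.sum_range_succ' (fun k => auxT (a + 1) b k) (a + 1),
          Finset.sum_range_succ' (fun k => auxT (a - 1) b k) (a + 1)]
        simp only [auxT_rec, auxT_zero]
        rw [Finset.sum_add_distrib, ← Finset.mul_sum, ← Finset.mul_sum]
        ring
      rw [hsum]
      have hb1 : b * auxS a (b - 1) = b * Nat.doubleFactorial (a + b - 2) := by
        rcases b with _ | b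
        · simp
        · have hev : Even (a + (b + 1 - 1)) := by
            rcases heven with ⟨t, ht⟩; exact ⟨t - 1, by omega⟩
          rw [ih a (by omega) _ hev]
          have e : a + (b + 1 - 1) - 1 = a + (b + 1) - 2 := by omega
          rw [e]
      have hb2 : a * ∑ k ∈ Finset.range (a + 2), auxT (a - 1) b k =
          a * Nat.doubleFactorial (a + b - 2) := by
        rcases a with _ | a
        · simp
        · have e : a + 1 - 1 = a := by omega
          rw [e, Finset.sum_range_succ, Finset.sum_range_succ,
            auxT_zero_of_lt b (by omega : a < a + 2),
            auxT_zero_of_lt b (by omega : a < a + 1)]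
          have hev : Even (a + b) := by
            rcases heven with ⟨t, ht⟩; exact ⟨t - 1, by omega⟩
          have hS := ih a (by omega) b hev
          unfold auxS at hS
          rw [Nat.add_zero, Nat.add_zero, hS]
          have e2 : a + b - 1 = a + 1 + b - 2 := by omega
          rw [e2]; ring
      rw [hb1, hb2, ← Nat.add_mul]
      have hge : 1 ≤ a + b := by rcases heven with ⟨t, ht⟩; omega
      have e1 : b + a = a + b := by omega
      rw [e1, dfact_step (a + b) hge]
      have e2 : a + 1 + b - 1 = a + b := by omega
      rw [e2]

/-- Combinatorial identity
`∑_{k=0}^{ℓ} C(ℓ,k)² · k! · ((ℓ−k−1)!!)² · 𝕀(ℓ−k even) = (2ℓ−1)!!`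
(with the conventions `(−1)!! = 1`, realized by truncated natural
subtraction). -/
theorem stmt4 (ℓ : ℕ) :
    ∑ k ∈ Finset.range (ℓ + 1),
        (if Even (ℓ - k) then
          (ℓ.choose k) ^ 2 * k.factorial * (Nat.doubleFactorial (ℓ - k - 1)) ^ 2
        else 0) =
      Nat.doubleFactorial (2 * ℓ - 1) := by
  have h := auxS_main ℓ ℓ ⟨ℓ, rfl⟩
  have e : ℓ + ℓ - 1 = 2 * ℓ - 1 := by omega
  rw [e] at h
  rw [← h]
  unfold auxS
  apply Finset.sum_congr rfl
  intro k _
  unfold auxT auxB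
  by_cases hev : Even (ℓ - k)
  · rw [if_pos hev, if_pos hev]; ring
  · rw [if_neg hev, if_neg hev]; ring
end

section
/- For every n ≥ 3 there exists c_0 > 0 such that for all c ≥ c_0 the equation m = erf(c m^{n−1}) has a solution m ∈ (0, 1). -/
/-- Error function `erf(x) = (2/√π) ∫_0^x e^{−t²} dt`. -/
noncomputable def erf (x : ℝ) : ℝ :=
  (2 / Real.sqrt Real.pi) * ∫ t in (0 : ℝ)..x, Real.exp (-t ^ 2)

lemma gauss_cont : Continuous fun t : ℝ => Real.exp (-t ^ 2) :=
  Real.continuous_exp.comp (continuous_pow 2).neg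

lemma gauss_ii (a b : ℝ) :
    IntervalIntegrable (fun t : ℝ => Real.exp (-t ^ 2)) MeasureTheory.volume a b :=
  gauss_cont.intervalIntegrable a b

lemma erf_continuous : Continuous erf :=
  continuous_const.mul (intervalIntegral.continuous_primitive gauss_ii 0)

lemma erf_mono : Monotone erf := by
  intro a b hab
  have h := intervalIntegral.integral_add_adjacent_intervals (gauss_ii 0 a) (gauss_ii a b)
  have h2 : 0 ≤ ∫ t in a..b, Real.exp (-t ^ 2) :=
    intervalIntegral.integral_nonneg hab fun t _ => (Real.exp_pos _).le
  have hpi : (0:ℝ) < 2 / Real.sqrt Real.pi := by positivity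
  unfold erf
  nlinarith

open MeasureTheory Real Set in
lemma int_lt_half_sqrt_pi (x : ℝ) :
    ∫ t in (0:ℝ)..x, Real.exp (-t ^ 2) < Real.sqrt Real.pi / 2 := by
  have key : ∫ t in Set.Ioi (0:ℝ), Real.exp (-t ^ 2) = Real.sqrt Real.pi / 2 := by
    have := integral_gaussian_Ioi 1
    simpa using this
  have hint : Integrable (fun t : ℝ => Real.exp (-t ^ 2)) volume := by
    have := integrable_exp_neg_mul_sq (b := (1:ℝ)) one_pos
    simpa using this
  have hhalfpos : (0:ℝ) < Real.sqrt Real.pi / 2 := by positivity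
  rcases le_or_gt x 0 with hx | hx
  · have h1 : ∫ t in (0:ℝ)..x, Real.exp (-t ^ 2) ≤ 0 := by
      rw [intervalIntegral.integral_symm]
      have : 0 ≤ ∫ t in x..(0:ℝ), Real.exp (-t ^ 2) :=
        intervalIntegral.integral_nonneg hx fun t _ => (Real.exp_pos _).le
      linarith
    linarith
  · have hsplit : (∫ t in Set.Ioc (0:ℝ) x, Real.exp (-t ^ 2))
        + (∫ t in Set.Ioi x, Real.exp (-t ^ 2))
        = ∫ t in Set.Ioi (0:ℝ), Real.exp (-t ^ 2) := by
      rw [← MeasureTheory.setIntegral_union (Set.Ioc_disjoint_Ioi le_rfl)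
        measurableSet_Ioi hint.integrableOn hint.integrableOn,
        Set.Ioc_union_Ioi_eq_Ioi hx.le]
    have htail : 0 < ∫ t in Set.Ioi x, Real.exp (-t ^ 2) := by
      rw [MeasureTheory.setIntegral_pos_iff_support_of_nonneg_ae
        (Filter.Eventually.of_forall fun t => (Real.exp_pos _).le) hint.integrableOn]
      have : Function.support (fun t : ℝ => Real.exp (-t ^ 2)) = Set.univ := by
        ext t; simp [Function.support, (Real.exp_pos (-t ^ 2)).ne']
      rw [this, Set.univ_inter]
      simp [Real.volume_Ioi]
    rw [intervalIntegral.integral_of_le hx.le]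
    calc ∫ t in Set.Ioc (0:ℝ) x, Real.exp (-t ^ 2)
        < (∫ t in Set.Ioc (0:ℝ) x, Real.exp (-t ^ 2))
          + ∫ t in Set.Ioi x, Real.exp (-t ^ 2) := by linarith
      _ = Real.sqrt Real.pi / 2 := by rw [hsplit, key]

lemma erf_lt_one (x : ℝ) : erf x < 1 := by
  have h := int_lt_half_sqrt_pi x
  have hpi : (0:ℝ) < Real.sqrt Real.pi := Real.sqrt_pos.mpr Real.pi_pos
  unfold erf
  rw [div_mul_eq_mul_div, mul_comm, ← div_mul_eq_mul_div, div_mul_eq_mul_div,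
    div_lt_one hpi]
  linarith

lemma erf_one_gt_half : (1:ℝ) / 2 < erf 1 := by
  have hlow : (2:ℝ) / 3 ≤ ∫ t in (0:ℝ)..1, Real.exp (-t ^ 2) := by
    have hle : ∀ t ∈ Set.Icc (0:ℝ) 1, 1 - t ^ 2 ≤ Real.exp (-t ^ 2) := by
      intro t _
      have := Real.add_one_le_exp (-t ^ 2)
      linarith
    have h1 : ∫ t in (0:ℝ)..1, (1 - t ^ 2) ≤ ∫ t in (0:ℝ)..1, Real.exp (-t ^ 2) :=
      intervalIntegral.integral_mono_on zero_le_one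
        ((continuous_const.sub (continuous_pow 2)).intervalIntegrable 0 1)
        (gauss_ii 0 1) hle
    have h2 : ∫ t in (0:ℝ)..1, (1 - t ^ 2) = 2 / 3 := by
      have hip : IntervalIntegrable (fun t : ℝ => t ^ 2) MeasureTheory.volume 0 1 :=
        (continuous_pow 2 : Continuous fun t : ℝ => t ^ 2).intervalIntegrable 0 1
      simp only [intervalIntegral.integral_sub intervalIntegrable_const hip,
        intervalIntegral.integral_const, integral_pow]
      norm_num
    linarith
  have hpi : (0:ℝ) < Real.sqrt Real.pi := Real.sqrt_pos.mpr Real.pi_pos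
  have hpi2 : Real.sqrt Real.pi < 2 := by
    rw [show (2:ℝ) = Real.sqrt 4 by rw [show (4:ℝ) = 2^2 by norm_num, Real.sqrt_sq]; norm_num]
    exact Real.sqrt_lt_sqrt Real.pi_pos.le (by nlinarith [Real.pi_lt_d2])
  have : (1:ℝ) < 2 / Real.sqrt Real.pi := (lt_div_iff₀ hpi).mpr (by linarith)
  unfold erf
  nlinarith

/-- For every `n ≥ 3` there exists `c₀ > 0` such that for all `c ≥ c₀` the
equation `m = erf(c m^{n−1})` has a solution `m ∈ (0,1)`. -/
theorem stmt11 (n : ℕ) (hn : 3 ≤ n) :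
    ∃ c₀ > (0 : ℝ), ∀ c ≥ c₀, ∃ m ∈ Set.Ioo (0 : ℝ) 1,
      m = erf (c * m ^ (n - 1)) := by
  refine ⟨2 ^ (n - 1), by positivity, fun c hc => ?_⟩
  have hc0 : (0:ℝ) < c := lt_of_lt_of_le (by positivity) hc
  set f : ℝ → ℝ := fun m => erf (c * m ^ (n - 1)) - m with hf
  have hfc : ContinuousOn f (Set.Icc (1/2 : ℝ) 1) :=
    (erf_continuous.comp ((continuous_const.mul (continuous_pow _)))).sub continuous_id
      |>.continuousOn
  have hhalf : 0 < f (1/2) := by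
    have harg : (1:ℝ) ≤ c * (1/2 : ℝ) ^ (n - 1) := by
      rw [div_pow, one_pow, mul_one_div, le_div_iff₀ (by positivity)]
      simpa using hc
    have := erf_mono harg
    have := erf_one_gt_half
    simp only [hf]
    linarith
  have hone : f 1 < 0 := by
    have := erf_lt_one (c * 1 ^ (n - 1))
    simp only [hf]
    linarith
  have hiv : (0:ℝ) ∈ Set.Icc (f 1) (f (1/2)) := ⟨hone.le, hhalf.le⟩
  obtain ⟨m, hm, hfm⟩ := intermediate_value_Icc' (by norm_num : (1/2:ℝ) ≤ 1) hfc hiv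
  refine ⟨m, ⟨by linarith [hm.1], ?_⟩, by simp only [hf] at hfm; linarith⟩
  rcases lt_or_eq_of_le hm.2 with h | h
  · exact h
  · exfalso
    have := erf_lt_one (c * m ^ (n - 1))
    simp only [hf] at hfm
    rw [h] at hfm this
    linarith
end
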